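/- arXiv:1811.07731 — 2 statements merged into one kernel-verified Lean document; each statement's English description precedes it below -/
import Mathlib

section
/- If Φ(z) = 1 + Σ_{n≥1} Φ_n z^n is analytic in the open unit disk with Re(Φ(z)) > 0 for all |z| < 1, then |Φ_n| ≤ 2 for all n ≥ 1. -/
/-!
Fix `0 < r < 1` and let `aₙ` be the `n`-th Taylor coefficient of `Φ`. On the circle
`|z| = r` the Cauchy formula writes `aₙ rⁿ` as the average of `(r / z)ⁿ Φ(z)`. For `n ≥ 1`
the average of `(r / z)ⁿ conj Φ(z)` vanishes: since `r / z = conj (z / r)` on the circle, it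
is the conjugate of the average of `(z / r)ⁿ Φ(z)`, which by the mean value property is the
value `0` of this function at the centre. Adding the two, `aₙ rⁿ` is the average of
`(r / z)ⁿ · 2 Re Φ(z)`. As `|r / z| = 1` and `Re Φ > 0`, its modulus is at most the average
of `2 Re Φ`, which is `2 Re Φ(0) = 2`. Let `r → 1`.
-/

open Metric Complex Real ComplexConjugate Filter Topology

theorem Real.norm_circleAverage_le_circleAverage_norm {E : Type*} [NormedAddCommGroup E]
    [NormedSpace ℝ E] (f : ℂ → E) (c : ℂ) (R : ℝ) :
    ‖circleAverage f c R‖ ≤ circleAverage (fun z ↦ ‖f z‖) c R := by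
  rw [circleAverage_def, circleAverage_def, norm_smul, Real.norm_of_nonneg (by positivity),
    smul_eq_mul]
  gcongr
  exact intervalIntegral.norm_integral_le_integral_norm two_pi_pos.le

theorem Complex.ofReal_div_eq_conj_div {w : ℂ} {R : ℝ} (hw : ‖w‖ = R) :
    (R : ℂ) / w = conj (w / R) := by
  rcases eq_or_ne w 0 with rfl | hw₀
  · simp
  have hR : (R : ℂ) ≠ 0 := by rw [← hw]; exact_mod_cast norm_ne_zero_iff.2 hw₀
  rw [map_div₀, conj_ofReal, div_eq_div_iff hw₀ hR, conj_mul', hw]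
  ring

section
variable {E : Type*} [NormedAddCommGroup E] [NormedSpace ℂ E] [CompleteSpace E]
  {f : ℂ → E} {c : ℂ} {R : ℝ}

theorem DiffContOnCl.circleAverage_inv_sub_pow_smul (hf : DiffContOnCl ℂ f (ball c R))
    (hR : 0 < R) (n : ℕ) :
    Real.circleAverage (fun z ↦ (z - c)⁻¹ ^ n • f z) c R =
      (n.factorial : ℂ)⁻¹ • iteratedDeriv n f c := by
  have hintegrand : (fun z ↦ (z - c)⁻¹ • (z - c)⁻¹ ^ n • f z) =
      fun z ↦ (1 / (z - c) ^ (n + 1)) • f z := by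
    funext z
    rw [smul_smul, one_div, pow_succ', mul_inv, inv_pow]
  rw [circleAverage_eq_circleIntegral hR.ne', hintegrand,
    hf.circleIntegral_one_div_sub_center_pow_smul hR n, smul_smul]
  congr 1
  field_simp [two_pi_I_ne_zero]

theorem DiffContOnCl.circleAverage_sub_pow_smul_eq_zero (hf : DiffContOnCl ℂ f (ball c |R|))
    {n : ℕ} (hn : n ≠ 0) :
    Real.circleAverage (fun z ↦ (z - c) ^ n • f z) c R = 0 := by
  have hpow : DiffContOnCl ℂ (fun z ↦ (z - c) ^ n) (ball c |R|) :=
    Differentiable.diffContOnCl (by fun_prop)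
  rw [(hpow.smul hf).circleAverage]
  simp [hn]

end

section
variable {f : ℂ → ℂ} {c : ℂ} {R : ℝ}

theorem DiffContOnCl.circleAverage_div_sub_pow_mul_conj_eq_zero
    (hf : DiffContOnCl ℂ f (ball c R)) (hR : 0 < R) {n : ℕ} (hn : n ≠ 0) :
    Real.circleAverage (fun z ↦ (R / (z - c)) ^ n * conj (f z)) c R = 0 := by
  have hint : CircleIntegrable (fun z ↦ ((z - c) / R) ^ n * f z) c R :=
    ((((continuousOn_id.sub continuousOn_const).div_const _).pow n).mul
      (hf.continuousOn_ball.mono sphere_subset_closedBall)).circleIntegrable hR.le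
  have hsplit : (fun z ↦ ((z - c) / R) ^ n * f z) =
      fun z ↦ ((R : ℂ) ^ n)⁻¹ • ((z - c) ^ n • f z) := by
    funext z
    rw [smul_eq_mul, smul_eq_mul, div_pow, div_eq_inv_mul, mul_assoc]
  have hf' : DiffContOnCl ℂ f (ball c |R|) := by rwa [abs_of_pos hR]
  calc Real.circleAverage (fun z ↦ (R / (z - c)) ^ n * conj (f z)) c R
      = Real.circleAverage (conj ∘ fun z ↦ ((z - c) / R) ^ n * f z) c R := by
        refine circleAverage_congr_sphere fun z hz ↦ ?_
        rw [abs_of_pos hR, mem_sphere_iff_norm] at hz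
        simp only [Function.comp_apply, map_mul, map_pow, ofReal_div_eq_conj_div hz]
    _ = conj (Real.circleAverage (fun z ↦ ((z - c) / R) ^ n * f z) c R) :=
        conjCLE.toContinuousLinearMap.circleAverage_comp_comm hint
    _ = 0 := by
        rw [hsplit, circleAverage_fun_smul, hf'.circleAverage_sub_pow_smul_eq_zero hn, smul_zero,
          map_zero]

theorem DiffContOnCl.circleAverage_div_sub_pow_mul_two_re (hf : DiffContOnCl ℂ f (ball c R))
    (hR : 0 < R) {n : ℕ} (hn : n ≠ 0) :
    Real.circleAverage (fun z ↦ (R / (z - c)) ^ n * (2 * (f z).re)) c R =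
      iteratedDeriv n f c / n.factorial * R ^ n := by
  have hcont : ContinuousOn f (sphere c R) := hf.continuousOn_ball.mono sphere_subset_closedBall
  have hweight : ContinuousOn (fun z ↦ ((R : ℂ) / (z - c)) ^ n) (sphere c R) :=
    (continuousOn_const.div (continuousOn_id.sub continuousOn_const) fun z hz ↦
      sub_ne_zero.2 (ne_of_mem_sphere hz hR.ne')).pow n
  have hsplit : (fun z ↦ (R / (z - c)) ^ n * f z) =
      fun z ↦ ((R : ℂ) ^ n) • ((z - c)⁻¹ ^ n • f z) := by
    funext z
    rw [smul_eq_mul, smul_eq_mul, div_eq_mul_inv, mul_pow, mul_assoc]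
  have hint : CircleIntegrable (fun z ↦ (R / (z - c)) ^ n * f z) c R :=
    (hweight.mul hcont).circleIntegrable hR.le
  have hint_conj : CircleIntegrable (fun z ↦ (R / (z - c)) ^ n * conj (f z)) c R :=
    (hweight.mul (continuous_conj.comp_continuousOn hcont)).circleIntegrable hR.le
  calc Real.circleAverage (fun z ↦ (R / (z - c)) ^ n * (2 * (f z).re)) c R
      = Real.circleAverage (fun z ↦ (R / (z - c)) ^ n * f z) c R +
          Real.circleAverage (fun z ↦ (R / (z - c)) ^ n * conj (f z)) c R := by
        rw [← circleAverage_fun_add hint hint_conj]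
        congr with z
        rw [← mul_add, add_conj, ofReal_mul, ofReal_ofNat]
    _ = iteratedDeriv n f c / n.factorial * R ^ n := by
        rw [hf.circleAverage_div_sub_pow_mul_conj_eq_zero hR hn, add_zero, hsplit,
          circleAverage_fun_smul, hf.circleAverage_inv_sub_pow_smul hR n, smul_eq_mul,
          smul_eq_mul]
        ring

theorem DiffContOnCl.norm_iteratedDeriv_div_factorial_mul_pow_le
    (hf : DiffContOnCl ℂ f (ball c R)) (hR : 0 < R) (hre : ∀ z ∈ sphere c R, 0 ≤ (f z).re)
    {n : ℕ} (hn : n ≠ 0) :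
    ‖iteratedDeriv n f c / n.factorial‖ * R ^ n ≤ 2 * (f c).re := by
  have hf' : DiffContOnCl ℂ f (ball c |R|) := by rwa [abs_of_pos hR]
  have hint : CircleIntegrable f c R :=
    (hf.continuousOn_ball.mono sphere_subset_closedBall).circleIntegrable hR.le
  calc ‖iteratedDeriv n f c / n.factorial‖ * R ^ n
      = ‖Real.circleAverage (fun z ↦ (R / (z - c)) ^ n * (2 * (f z).re)) c R‖ := by
        rw [hf.circleAverage_div_sub_pow_mul_two_re hR hn, norm_mul, norm_pow, norm_real,
          Real.norm_of_nonneg hR.le]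
    _ ≤ Real.circleAverage (fun z ↦ ‖(R / (z - c)) ^ n * (2 * (f z).re)‖) c R :=
        norm_circleAverage_le_circleAverage_norm _ c R
    _ = Real.circleAverage (fun z ↦ 2 * (f z).re) c R := by
        refine circleAverage_congr_sphere fun z hz ↦ ?_
        rw [abs_of_pos hR] at hz
        have hnorm : ‖z - c‖ = R := mem_sphere_iff_norm.1 hz
        rw [norm_mul, norm_pow, norm_div, norm_real, Real.norm_of_nonneg hR.le, hnorm,
          div_self hR.ne', one_pow, one_mul, ← ofReal_ofNat, ← ofReal_mul, norm_real,
          Real.norm_of_nonneg (mul_nonneg zero_le_two (hre z hz))]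
    _ = 2 * Real.circleAverage (fun z ↦ (f z).re) c R :=
        circleAverage_fun_smul (a := (2 : ℝ)) (f := fun z ↦ (f z).re)
    _ = 2 * (Real.circleAverage f c R).re := congrArg (2 * ·) (reCLM.circleAverage_comp_comm hint)
    _ = 2 * (f c).re := by rw [hf'.circleAverage]

end

/-- Carathéodory's lemma: if Φ is analytic on the open unit disk with Φ(0)=1 and
Re Φ(z) > 0 there, then all Taylor coefficients Φ_n (n ≥ 1) satisfy |Φ_n| ≤ 2. -/
theorem caratheodory_coeff_bound (Φ : ℂ → ℂ)
    (hΦ : DifferentiableOn ℂ Φ (ball (0 : ℂ) 1))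
    (h0 : Φ 0 = 1)
    (hre : ∀ z ∈ ball (0 : ℂ) 1, 0 < (Φ z).re) :
    ∀ n : ℕ, 1 ≤ n → ‖iteratedDeriv n Φ 0 / (Nat.factorial n : ℂ)‖ ≤ 2 := by
  intro n hn
  set a := ‖iteratedDeriv n Φ 0 / (Nat.factorial n : ℂ)‖
  have hbound : ∀ r ∈ Set.Ioo (0 : ℝ) 1, a * r ^ n ≤ 2 := by
    rintro r ⟨hr₀, hr₁⟩
    have hsphere : sphere (0 : ℂ) r ⊆ ball 0 1 :=
      sphere_subset_closedBall.trans (closedBall_subset_ball hr₁)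
    have := (hΦ.diffContOnCl_ball (closedBall_subset_ball hr₁))
      |>.norm_iteratedDeriv_div_factorial_mul_pow_le hr₀ (fun z hz ↦ (hre z (hsphere hz)).le)
        (Nat.one_le_iff_ne_zero.1 hn)
    rwa [h0, one_re, mul_one] at this
  have hlim : Tendsto (fun r : ℝ ↦ a * r ^ n) (𝓝[<] 1) (𝓝 a) :=
    ((show Continuous (fun r : ℝ ↦ a * r ^ n) by fun_prop).tendsto' 1 a (by simp)).mono_left
      nhdsWithin_le_nhds
  exact le_of_tendsto hlim (eventually_of_mem (Ioo_mem_nhdsLT zero_lt_one) hbound)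
end

section
/- Suppose (μ+2λ+6ξδ)[((μ−1)/2)a_2² + c a_3] = Φ_1 t_2 + Φ_2 t_1² and (μ+2λ+6ξδ)[((μ+3)/2)a_2² − c a_3] = Φ_1 s_2 + Φ_2 s_1², where c = 1 + 6δ/(2λ+1), |Φ_1|, |Φ_2| ≤ 2, |t_i|, |s_i| ≤ 1, μ ≥ 0, λ ≥ 1, δ ≥ 0, ξ = (2λ+μ)/(2λ+1). Then (μ+2λ+6ξδ)(μ+1) a_2² = Φ_1(t_2+s_2) + Φ_2(t_1²+s_1²), and hence |a_2| ≤ √(8/((μ+2λ+6ξδ)(μ+1))). -/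
/-!
Adding the two coefficient equations cancels `a₃` and leaves
`(μ+2λ+6ξδ)(μ+1) a₂² = Φ₁(t₂+s₂) + Φ₂(t₁²+s₁²)`; the right-hand side has norm at most
`2·2 + 2·2 = 8`, and the left-hand side has norm `(μ+2λ+6ξδ)(μ+1)‖a₂‖²` with a positive factor.
-/

lemma norm_sq_add_sq_le_two {R : Type*} [SeminormedRing R] {x y : R}
    (hx : ‖x‖ ≤ 1) (hy : ‖y‖ ≤ 1) : ‖x ^ 2 + y ^ 2‖ ≤ 2 :=
  calc ‖x ^ 2 + y ^ 2‖ ≤ ‖x‖ ^ 2 + ‖y‖ ^ 2 :=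
        (norm_add_le _ _).trans (add_le_add (norm_pow_le' x two_pos) (norm_pow_le' y two_pos))
    _ ≤ 1 + 1 := by gcongr <;> exact pow_le_one₀ (norm_nonneg _) ‹_›
    _ = 2 := one_add_one_eq_two

lemma norm_mul_add_mul_le {R : Type*} [SeminormedRing R] {p q u v : R} {P U : ℝ}
    (hp : ‖p‖ ≤ P) (hq : ‖q‖ ≤ P) (hu : ‖u‖ ≤ U) (hv : ‖v‖ ≤ U) :
    ‖p * u + q * v‖ ≤ 2 * P * U := by
  have hP : 0 ≤ P := (norm_nonneg p).trans hp
  calc ‖p * u + q * v‖ ≤ ‖p‖ * ‖u‖ + ‖q‖ * ‖v‖ :=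
        (norm_add_le _ _).trans (add_le_add (norm_mul_le p u) (norm_mul_le q v))
    _ ≤ P * U + P * U := by gcongr
    _ = 2 * P * U := by ring

lemma le_sqrt_div_of_mul_sq_le {x M B : ℝ} (hM : 0 < M) (h : M * x ^ 2 ≤ B) :
    x ≤ Real.sqrt (B / M) :=
  Real.le_sqrt_of_sq_le <| (le_div_iff₀ hM).2 <| mul_comm M (x ^ 2) ▸ h

theorem a2_bound_second_general (mu lam del xi c : ℝ)
    (hmu : 0 ≤ mu)
    (a2 a3 Phi1 Phi2 t1 t2 s1 s2 : ℂ)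
    (h1 : ((mu : ℂ) + 2 * lam + 6 * xi * del) *
        ((((mu : ℂ) - 1) / 2) * a2 ^ 2 + (c : ℂ) * a3) = Phi1 * t2 + Phi2 * t1 ^ 2)
    (h2 : ((mu : ℂ) + 2 * lam + 6 * xi * del) *
        ((((mu : ℂ) + 3) / 2) * a2 ^ 2 - (c : ℂ) * a3) = Phi1 * s2 + Phi2 * s1 ^ 2)
    (hPhi1 : ‖Phi1‖ ≤ 2) (hPhi2 : ‖Phi2‖ ≤ 2)
    (ht1 : ‖t1‖ ≤ 1) (ht2 : ‖t2‖ ≤ 1) (hs1 : ‖s1‖ ≤ 1) (hs2 : ‖s2‖ ≤ 1)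
    (hpos : 0 < mu + 2 * lam + 6 * xi * del) :
    ((mu : ℂ) + 2 * lam + 6 * xi * del) * ((mu : ℂ) + 1) * a2 ^ 2 =
        Phi1 * (t2 + s2) + Phi2 * (t1 ^ 2 + s1 ^ 2) ∧
    ‖a2‖ ≤ Real.sqrt (8 / ((mu + 2 * lam + 6 * xi * del) * (mu + 1))) := by
  have hsum : ((mu : ℂ) + 2 * lam + 6 * xi * del) * ((mu : ℂ) + 1) * a2 ^ 2 =
      Phi1 * (t2 + s2) + Phi2 * (t1 ^ 2 + s1 ^ 2) := by
    linear_combination h1 + h2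
  refine ⟨hsum, le_sqrt_div_of_mul_sq_le (by positivity) ?_⟩
  have hts : ‖t2 + s2‖ ≤ 2 := (norm_add_le _ _).trans (by linarith)
  calc (mu + 2 * lam + 6 * xi * del) * (mu + 1) * ‖a2‖ ^ 2
      = ‖((mu : ℂ) + 2 * lam + 6 * xi * del) * ((mu : ℂ) + 1) * a2 ^ 2‖ := by
        have hcoeff : ((mu : ℂ) + 2 * lam + 6 * xi * del) * ((mu : ℂ) + 1) =
            (((mu + 2 * lam + 6 * xi * del) * (mu + 1) : ℝ) : ℂ) := by push_cast; ring
        rw [norm_mul, norm_pow, hcoeff, Complex.norm_real, Real.norm_of_nonneg (by positivity)]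
    _ ≤ 2 * 2 * 2 := hsum ▸ norm_mul_add_mul_le hPhi1 hPhi2 hts (norm_sq_add_sq_le_two ht1 hs1)
    _ = 8 := by norm_num

/-- Adding the two coefficient equations gives
(μ+2λ+6ξδ)(μ+1)a₂² = Φ₁(t₂+s₂) + Φ₂(t₁²+s₁²), hence
|a₂| ≤ √(8/((μ+2λ+6ξδ)(μ+1))). -/
theorem a2_bound_second (mu lam del xi c : ℝ)
    (hlam : 1 ≤ lam) (hmu : 0 ≤ mu) (hdel : 0 ≤ del)
    (hxi : xi = (2 * lam + mu) / (2 * lam + 1))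
    (hc : c = 1 + 6 * del / (2 * lam + 1))
    (a2 a3 Phi1 Phi2 t1 t2 s1 s2 : ℂ)
    (h1 : ((mu : ℂ) + 2 * lam + 6 * xi * del) *
        ((((mu : ℂ) - 1) / 2) * a2 ^ 2 + (c : ℂ) * a3) = Phi1 * t2 + Phi2 * t1 ^ 2)
    (h2 : ((mu : ℂ) + 2 * lam + 6 * xi * del) *
        ((((mu : ℂ) + 3) / 2) * a2 ^ 2 - (c : ℂ) * a3) = Phi1 * s2 + Phi2 * s1 ^ 2)
    (hPhi1 : ‖Phi1‖ ≤ 2) (hPhi2 : ‖Phi2‖ ≤ 2)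
    (ht1 : ‖t1‖ ≤ 1) (ht2 : ‖t2‖ ≤ 1) (hs1 : ‖s1‖ ≤ 1) (hs2 : ‖s2‖ ≤ 1)
    (hpos : 0 < mu + 2 * lam + 6 * xi * del) :
    ((mu : ℂ) + 2 * lam + 6 * xi * del) * ((mu : ℂ) + 1) * a2 ^ 2 =
        Phi1 * (t2 + s2) + Phi2 * (t1 ^ 2 + s1 ^ 2) ∧
    ‖a2‖ ≤ Real.sqrt (8 / ((mu + 2 * lam + 6 * xi * del) * (mu + 1))) :=
  a2_bound_second_general mu lam del xi c hmu a2 a3 Phi1 Phi2 t1 t2 s1 s2 h1 h2 hPhi1 hPhi2 ht1 ht2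
    hs1 hs2 hpos
end
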